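/- Let (R, 𝔪) be a Noetherian local ring with depth R > 0. Then there exists n₀ such that 𝔪^{n+1} : 𝔪 = 𝔪^n for all n ≥ n₀; consequently ℓ_R((𝔪^{n+1}:𝔪)/𝔪^{n+1}) = ℓ_R(𝔪^n/𝔪^{n+1}) for all n ≥ n₀. -/

import Mathlib

open IsLocalRing

/-- Length of an `R`-module, as the Krull dimension of its submodule lattice. -/
noncomputable def mLen (R M : Type*) [CommRing R] [AddCommGroup M] [Module R M] : ℕ∞ :=
  (Order.krullDim (Submodule R M)).unbotD 0

/-- The quotient `B/A` of two submodules of a module. -/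
abbrev subQuot {R M : Type*} [CommRing R] [AddCommGroup M] [Module R M]
    (A B : Submodule R M) := (↥B) ⧸ (A.comap B.subtype)

section aux

variable {R : Type*} [CommRing R] [IsNoetherianRing R]

open Ideal PolynomialModule in
/-- Key lemma: if `I` contains a nonzerodivisor, the filtration `n ↦ (I^{n+1} : I)` is
eventually `I^n`. -/
theorem colon_pow_eventually_eq (I : Ideal R)
    (hdepth : ∃ a ∈ I, a ∈ nonZeroDivisors R) :
    ∃ n₀ : ℕ, ∀ n ≥ n₀, (I ^ (n + 1)).colon I = I ^ n := by
  obtain ⟨a, haI, ha0⟩ := hdepth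
  -- the colon filtration
  have Fmono : ∀ n : ℕ, (I ^ (n + 1 + 1)).colon I ≤ (I ^ (n + 1)).colon I := by
    intro n
    exact Submodule.colon_mono (Ideal.pow_le_pow_right (by omega)) le_rfl
  have Fsmul : ∀ n : ℕ, I • (I ^ (n + 1)).colon I ≤ (I ^ (n + 1 + 1)).colon I := by
    intro n
    rw [Submodule.smul_le]
    intro m hm x hx
    rw [Submodule.mem_colon] at hx ⊢
    intro p hp
    have : x • p ∈ I ^ (n + 1) := hx p hp
    have : m * (x * p) ∈ I * I ^ (n + 1) := Ideal.mul_mem_mul hm this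
    rw [← pow_succ'] at this
    simpa [smul_eq_mul, mul_assoc] using this
  set F : I.Filtration R :=
    { N := fun n => (I ^ (n + 1)).colon I
      mono := Fmono
      smul_le := Fsmul } with hF
  -- the stable filtration n ↦ I^{n+1}
  set G : I.Filtration R := I.stableFiltration (I : Submodule R R) with hG
  have hGN : ∀ n : ℕ, G.N n = I ^ (n + 1) := by
    intro n
    show I ^ n • (I : Submodule R R) = I ^ (n + 1)
    rw [smul_eq_mul, pow_succ]
  have hGfg : G.submodule.FG :=
    (Ideal.Filtration.submodule_fg_iff_stable _ (fun i => IsNoetherian.noetherian _)).2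
      (I.stableFiltration_stable _)
  -- multiplication by `a` as a `reesAlgebra I`-linear endomorphism
  set c : reesAlgebra I := algebraMap R (reesAlgebra I) a with hc
  set φ : PolynomialModule R R →ₗ[reesAlgebra I] PolynomialModule R R :=
    c • (LinearMap.id) with hφ
  have hφ_apply : ∀ (f : PolynomialModule R R) (i : ℕ), (φ f).coeff i = a * f.coeff i := by
    intro f i
    show (c • f).coeff i = a * f.coeff i
    rw [hc, algebraMap_smul]
    rfl
  have hφ_inj : Function.Injective φ := by
    intro f g hfg
    refine PolynomialModule.ext (Finsupp.ext fun i => ?_)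
    have h1 := hφ_apply f i
    have h2 := hφ_apply g i
    rw [hfg] at h1
    have heq : f.coeff i * a = g.coeff i * a := by
      rw [mul_comm] at h1 h2; exact h1.symm.trans h2
    have hz : (f.coeff i - g.coeff i) * a = 0 := by rw [sub_mul, heq, sub_self]
    exact sub_eq_zero.mp ((mul_right_mem_nonZeroDivisors_eq_zero_iff ha0).mp hz)
  have hmap : Submodule.map φ F.submodule ≤ G.submodule := by
    rintro _ ⟨f, hf, rfl⟩
    rw [Ideal.Filtration.mem_submodule]
    intro i
    rw [hGN i, hφ_apply]
    have := (Ideal.Filtration.mem_submodule F f).1 hf i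
    have hX : f.coeff i ∈ (I ^ (i + 1)).colon I := this
    have := Submodule.mem_colon.1 hX a haI
    simpa [smul_eq_mul, mul_comm] using this
  have hFfg : F.submodule.FG := by
    have hnoe := isNoetherian_of_fg_of_noetherian _ hGfg
    rw [isNoetherian_submodule] at hnoe
    exact Submodule.fg_of_fg_map_injective φ hφ_inj (hnoe _ hmap)
  have hstable : F.Stable :=
    (Ideal.Filtration.submodule_fg_iff_stable _ (fun i => IsNoetherian.noetherian _)).1 hFfg
  obtain ⟨n₀, hn₀⟩ := hstable
  refine ⟨n₀ + 1, fun n hn => ?_⟩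
  have hsup : I ^ n ≤ (I ^ (n + 1)).colon I := by
    intro x hx
    rw [Submodule.mem_colon]
    intro p hp
    have : x * p ∈ I ^ n * I := Ideal.mul_mem_mul hx hp
    rwa [← pow_succ, smul_eq_mul] at *
  refine le_antisymm ?_ hsup
  -- prove `F.N m ≤ I ^ m` for all `m ≥ n₀ + 1` by induction
  have key : ∀ k : ℕ, F.N (n₀ + 1 + k) ≤ I ^ (n₀ + 1 + k) := by
    intro k
    induction k with
    | zero =>
      have := hn₀ n₀ le_rfl
      rw [← this]
      rw [Submodule.smul_le]
      intro m hm x hx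
      have : x * m ∈ I ^ (n₀ + 1) := by
        simpa [smul_eq_mul] using Submodule.mem_colon.1 hx m hm
      simpa [smul_eq_mul, mul_comm] using this
    | succ k ih =>
      have := hn₀ (n₀ + 1 + k) (by omega)
      have h2 : I • F.N (n₀ + 1 + k) ≤ I • (I ^ (n₀ + 1 + k) : Ideal R) :=
        smul_mono_right _ ih
      rw [this] at h2
      have : I • (I ^ (n₀ + 1 + k) : Ideal R) = I ^ (n₀ + 1 + k + 1) := by
        rw [smul_eq_mul, ← pow_succ']
      rw [this] at h2
      have : n₀ + 1 + (k + 1) = n₀ + 1 + k + 1 := by omega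
      rw [this]
      exact h2
  obtain ⟨k, rfl⟩ : ∃ k, n = n₀ + 1 + k := ⟨n - (n₀ + 1), by omega⟩
  exact key k

end aux

/-- if `(R,𝔪)` is Noetherian local with `depth R > 0` (i.e. `𝔪` contains a
nonzerodivisor), then there is `n₀` with `𝔪^{n+1} : 𝔪 = 𝔪^n` for all `n ≥ n₀`; consequently
`ℓ_R((𝔪^{n+1}:𝔪)/𝔪^{n+1}) = ℓ_R(𝔪^n/𝔪^{n+1})` for all `n ≥ n₀`. -/
theorem stmt14 {R : Type*} [CommRing R] [IsNoetherianRing R] [IsLocalRing R]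
    (hdepth : ∃ a ∈ maximalIdeal R, a ∈ nonZeroDivisors R) :
    ∃ n₀ : ℕ, ∀ n ≥ n₀,
      (maximalIdeal R ^ (n + 1)).colon (maximalIdeal R) = maximalIdeal R ^ n ∧
      mLen R (subQuot (maximalIdeal R ^ (n + 1))
          ((maximalIdeal R ^ (n + 1)).colon (maximalIdeal R)))
        = mLen R (subQuot (maximalIdeal R ^ (n + 1)) (maximalIdeal R ^ n)) := by
  obtain ⟨n₀, h⟩ := colon_pow_eventually_eq (maximalIdeal R) hdepth
  exact ⟨n₀, fun n hn => ⟨h n hn, by rw [h n hn]⟩⟩
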